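/- Let p be a real number with |p| < 1, let d be a natural number, let f and c₀, …, c_d be real numbers (the scalars N_iF for a univariate attack), and suppose ∑_{i=0}^{d} c_i = -1. Define the operator Δ_p on real sequences by (Δ_p u)(k) := u(k+1) - p * u(k). If r : ℕ → ℝ satisfies (Δ_p^[d] r)(k) = -(1-p)^d * (∑_{i=0}^{d} c_i) * f for all k ∈ ℕ, then r converges to f. -/

import Mathlib

/-!
Write `Δ_p u (k) = u (k + 1) - p u (k)`. If `Δ_p u → L` with `‖p‖ < 1`, then `v = u - L / (1 - p)`
satisfies `‖v (k + 1)‖ ≤ ‖p‖ ‖v k‖ + δ` for any `δ > 0` and `k ≥ N(δ)`; iterating this contraction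
bound gives `‖v (N + m)‖ ≤ ‖p‖ ^ m ‖v N‖ + δ / (1 - ‖p‖)`, so `u → L / (1 - p)`. Applying this `d` times to the
constant sequence `Δ_p^[d] r = (1 - p)^d f` yields `r → f`.
-/

open Filter Topology Finset

variable {𝕜 E : Type*} [NormedField 𝕜] [SeminormedAddCommGroup E] [NormedSpace 𝕜 E]

def shiftSubSmul (p : 𝕜) (u : ℕ → E) : ℕ → E := fun k => u (k + 1) - p • u k

theorem one_sub_ne_zero_of_norm_lt_one {p : 𝕜} (hp : ‖p‖ < 1) : 1 - p ≠ 0 :=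
  sub_ne_zero.2 fun h => by simp [← h] at hp

theorem norm_le_pow_mul_add_of_norm_shiftSubSmul_le {p : 𝕜} (hp : ‖p‖ < 1) {v : ℕ → E}
    {δ : ℝ} {N : ℕ} (h : ∀ k ≥ N, ‖shiftSubSmul p v k‖ ≤ δ) (m : ℕ) :
    ‖v (N + m)‖ ≤ ‖p‖ ^ m * ‖v N‖ + δ / (1 - ‖p‖) := by
  have hq : 0 < 1 - ‖p‖ := sub_pos.2 hp
  have hδ : 0 ≤ δ := (norm_nonneg _).trans (h N le_rfl)
  induction m with
  | zero => simpa using div_nonneg hδ hq.le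
  | succ m ih =>
    have hstep : ‖v (N + m + 1)‖ ≤ ‖p‖ * ‖v (N + m)‖ + δ :=
      calc ‖v (N + m + 1)‖ = ‖p • v (N + m) + shiftSubSmul p v (N + m)‖ := by
            simp [shiftSubSmul]
        _ ≤ ‖p‖ * ‖v (N + m)‖ + δ :=
            (norm_add_le _ _).trans (add_le_add (norm_smul _ _).le (h _ (Nat.le_add_right N m)))
    calc ‖v (N + (m + 1))‖ ≤ ‖p‖ * ‖v (N + m)‖ + δ := hstep
      _ ≤ ‖p‖ * (‖p‖ ^ m * ‖v N‖ + δ / (1 - ‖p‖)) + δ := by gcongr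
      _ = ‖p‖ ^ (m + 1) * ‖v N‖ + δ / (1 - ‖p‖) := by field_simp; ring

theorem tendsto_zero_of_tendsto_shiftSubSmul_zero {p : 𝕜} (hp : ‖p‖ < 1) {v : ℕ → E}
    (h : Tendsto (shiftSubSmul p v) atTop (𝓝 0)) : Tendsto v atTop (𝓝 0) := by
  rw [NormedAddGroup.tendsto_nhds_zero] at h ⊢
  intro ε hε
  have hq : 0 < 1 - ‖p‖ := sub_pos.2 hp
  obtain ⟨N, hN⟩ := eventually_atTop.1 (h (ε * (1 - ‖p‖) / 2) (by positivity))
  have hgeo : Tendsto (fun m => ‖p‖ ^ m * ‖v N‖) atTop (𝓝 0) := by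
    simpa using (tendsto_pow_atTop_nhds_zero_of_lt_one (norm_nonneg p) hp).mul_const ‖v N‖
  obtain ⟨M, hM⟩ := eventually_atTop.1 (hgeo.eventually (gt_mem_nhds (half_pos hε)))
  refine eventually_atTop.2 ⟨N + M, fun k hk => ?_⟩
  obtain ⟨m, rfl⟩ := Nat.exists_eq_add_of_le ((Nat.le_add_right N M).trans hk)
  calc ‖v (N + m)‖ ≤ ‖p‖ ^ m * ‖v N‖ + ε * (1 - ‖p‖) / 2 / (1 - ‖p‖) :=
        norm_le_pow_mul_add_of_norm_shiftSubSmul_le hp (fun k hk => (hN k hk).le) m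
    _ < ε / 2 + ε / 2 := by
        have := hM m (by omega)
        rw [div_right_comm, mul_div_cancel_right₀ _ hq.ne']
        linarith
    _ = ε := add_halves ε

theorem tendsto_of_tendsto_shiftSubSmul {p : 𝕜} (hp : ‖p‖ < 1) {u : ℕ → E} {L : E}
    (h : Tendsto (shiftSubSmul p u) atTop (𝓝 L)) :
    Tendsto u atTop (𝓝 ((1 - p)⁻¹ • L)) := by
  set c := (1 - p)⁻¹ • L
  have hc : (1 - p) • c = L := smul_inv_smul₀ (one_sub_ne_zero_of_norm_lt_one hp) L
  have hshift : shiftSubSmul p (fun k => u k - c) = fun k => shiftSubSmul p u k - L := by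
    funext k
    rw [← hc]
    simp only [shiftSubSmul]
    module
  have h0 := tendsto_zero_of_tendsto_shiftSubSmul_zero hp
    (v := fun k => u k - c) (by simpa [hshift] using h.sub_const L)
  simpa using h0.add_const c

theorem tendsto_of_tendsto_iterate_shiftSubSmul {p : 𝕜} (hp : ‖p‖ < 1) (d : ℕ) {u : ℕ → E}
    {L : E} (h : Tendsto ((shiftSubSmul p)^[d] u) atTop (𝓝 L)) :
    Tendsto u atTop (𝓝 ((1 - p)⁻¹ ^ d • L)) := by
  induction d generalizing u with
  | zero => simpa using h
  | succ d ih =>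
    rw [Function.iterate_succ_apply] at h
    simpa [smul_smul, pow_succ'] using tendsto_of_tendsto_shiftSubSmul hp (ih h)

theorem steady_state_residual_tracks_attack
    (p : ℝ) (hp : |p| < 1) (d : ℕ) (f : ℝ)
    (c : Fin (d + 1) → ℝ) (hc : ∑ i, c i = -1)
    (Δ : (ℕ → ℝ) → (ℕ → ℝ))
    (hΔ : Δ = fun u k => u (k + 1) - p * u k)
    (r : ℕ → ℝ)
    (hr : ∀ k : ℕ, (Δ^[d] r) k = -(1 - p) ^ d * (∑ i, c i) * f) :
    Filter.Tendsto r Filter.atTop (nhds f) := by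
  have hp' : ‖p‖ < 1 := by rwa [Real.norm_eq_abs]
  obtain rfl : Δ = shiftSubSmul p := hΔ
  have hconst : (shiftSubSmul p)^[d] r = fun _ => (1 - p) ^ d * f := by
    funext k
    rw [hr k, hc]
    ring
  have h := tendsto_of_tendsto_iterate_shiftSubSmul hp' d (L := (1 - p) ^ d * f)
    (hconst ▸ tendsto_const_nhds)
  rwa [smul_eq_mul, inv_pow, inv_mul_cancel_left₀
    (pow_ne_zero d (one_sub_ne_zero_of_norm_lt_one hp'))] at h
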